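/- arXiv:1401.1905 — 2 statements merged into one kernel-verified Lean document; each statement's English description precedes it below -/
import Mathlib

section
/- The tree-based (1+1) EA solves the instance G_S in expected constant time: the subgraph of finite-cost connections between clusters of G_S is a star centered at the central cluster, so the cluster graph admits exactly one spanning tree of finite cost, and the algorithm already holds an optimal upper-level solution after initialization. -/
open scoped ENNReal BigOperators Classical

noncomputable section

/-- Probability that a (1+1) evolutionary algorithm with initial distribution `μ0` and
one-step transition kernel `K` follows the trajectory prefix `x 0, x 1, …, x t`. -/
def trajProb {State : Type*} (μ0 : State → ℝ≥0∞) (K : State → State → ℝ≥0∞)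
    {t : ℕ} (x : Fin (t + 1) → State) : ℝ≥0∞ :=
  μ0 (x 0) * ∏ i : Fin t, K (x i.castSucc) (x i.succ)

/-- `survival μ0 K Opt t` is the probability `P(T > t)` that no optimal state (w.r.t. the
goal predicate `Opt`) occurs among the first `t+1` states `X 0, …, X t` of the Markov chain
with initial distribution `μ0` and transition kernel `K`; here `T = inf {t | Opt (X t)}`
is the optimization time. -/
def survival {State : Type*} (μ0 : State → ℝ≥0∞) (K : State → State → ℝ≥0∞)
    (Opt : State → Prop) (t : ℕ) : ℝ≥0∞ :=
  ∑' x : Fin (t + 1) → State, if ∀ i, ¬ Opt (x i) then trajProb μ0 K x else 0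

/-- The expected optimization time `E[T] = ∑_{t ≥ 0} P(T > t)` of the Markov chain with
initial distribution `μ0` and transition kernel `K`, where `T = inf {t | Opt (X t)}`. -/
def expectedOptTime {State : Type*} (μ0 : State → ℝ≥0∞) (K : State → State → ℝ≥0∞)
    (Opt : State → Prop) : ℝ≥0∞ :=
  ∑' t : ℕ, survival μ0 K Opt t

/-- The one-step transition kernel of a (1+1) EA: from the current solution `x`, an
offspring `y` is sampled from the mutation distribution `mutate x`; it is accepted (i.e. the
chain moves to `y`) iff `cost y ≤ cost x`, otherwise the chain stays at `x`. -/
def eaKernel {State : Type*} (mutate : State → State → ℝ≥0∞) (cost : State → ℝ≥0∞)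
    (x y : State) : ℝ≥0∞ :=
  (if cost y ≤ cost x then mutate x y else 0) +
    (if y = x then ∑' z : State, (if cost z ≤ cost x then 0 else mutate x z) else 0)

/-- Mutation distribution of the cluster-based (1+1) EA with spanned nodes representation:
independently for each cluster `i`, with probability `1/m` the node chosen in cluster `i`
is replaced by a node drawn uniformly at random from `Vc i` (and is kept unchanged
otherwise). `clusterMut m Vc x y` is the probability that mutating `x` yields `y`. -/
def clusterMut (m : ℕ) {V : Type*} [DecidableEq V] (Vc : Fin m → Finset V)
    (x y : Fin m → V) : ℝ≥0∞ :=
  ∏ i : Fin m,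
    ((if y i ∈ Vc i then (m : ℝ≥0∞)⁻¹ * ((Vc i).card : ℝ≥0∞)⁻¹ else 0) +
      (if y i = x i then 1 - (m : ℝ≥0∞)⁻¹ else 0))

/-- The cost of the minimum spanning tree of the subgraph induced by the node selection
`x : Fin m → V` (one node per cluster), where `c` is the (symmetric, possibly infinite)
edge-cost function: the infimum over all trees `G` on the `m` clusters of the total cost
of the corresponding edges. -/
def mstCost {m : ℕ} {V : Type*} (c : V → V → ℝ≥0∞) (x : Fin m → V) : ℝ≥0∞ :=
  ⨅ (G : SimpleGraph (Fin m)) (_ : G.IsTree),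
    (∑ i : Fin m, ∑ j : Fin m, if G.Adj i j then c (x i) (x j) else 0) / 2


/-- `E` is (the edge set of) a spanning tree of the complete graph on the `m` clusters. -/
def IsSpanningTree (m : ℕ) (E : Finset (Sym2 (Fin m))) : Prop :=
  (∀ e ∈ E, ¬ e.IsDiag) ∧ (SimpleGraph.fromEdgeSet (E : Set (Sym2 (Fin m)))).IsTree

/-- The edges of the complete graph on the `m` clusters that are not in `E`. -/
def nonTreeEdges (m : ℕ) (E : Finset (Sym2 (Fin m))) : Finset (Sym2 (Fin m)) :=
  Finset.univ.filter (fun e => ¬ e.IsDiag ∧ e ∉ E)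

/-- The edges of the cycle created by inserting the edge `e` into the spanning tree `E`:
those edges `f` of `E ∪ {e}` whose removal from `E ∪ {e}` leaves a spanning tree. -/
def cycleEdges (m : ℕ) (E : Finset (Sym2 (Fin m))) (e : Sym2 (Fin m)) :
    Finset (Sym2 (Fin m)) :=
  (insert e E).filter (fun f => IsSpanningTree m ((insert e E).erase f))

/-- The transition probability of a single edge swap: an edge `e` not in the current tree
`E` is chosen uniformly at random and inserted, and an edge chosen uniformly at random from
the cycle thereby created is removed. -/
def swapK (m : ℕ) (E E' : Finset (Sym2 (Fin m))) : ℝ≥0∞ :=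
  ∑ e ∈ nonTreeEdges m E, ((nonTreeEdges m E).card : ℝ≥0∞)⁻¹ *
    ∑ f ∈ cycleEdges m E e, ((cycleEdges m E e).card : ℝ≥0∞)⁻¹ *
      (if E' = (insert e E).erase f then 1 else 0)

/-- `k`-fold composition of the edge-swap transition kernel. -/
def swapKpow (m : ℕ) : ℕ → Finset (Sym2 (Fin m)) → Finset (Sym2 (Fin m)) → ℝ≥0∞
  | 0, E, E' => if E' = E then 1 else 0
  | k + 1, E, E' => ∑' E'' : Finset (Sym2 (Fin m)), swapKpow m k E E'' * swapK m E'' E'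

/-- The Poisson distribution with expectation `1`: `P(K = k) = exp(-1)/k!`. -/
def poisson1 (k : ℕ) : ℝ≥0∞ := ENNReal.ofReal (Real.exp (-1) / Nat.factorial k)

/-- Mutation distribution of the tree-based (1+1) EA: `K ~ Poisson(1)` edge swaps are
applied to the current spanning tree. -/
def treeMut (m : ℕ) (E E' : Finset (Sym2 (Fin m))) : ℝ≥0∞ :=
  ∑' k : ℕ, poisson1 k * swapKpow m k E E'

/-- The cost of the edge `e` between two clusters, given the node selection `p` and the
(symmetric) node-cost function `c`. -/
def eCost {V : Type*} (c : V → V → ℝ≥0∞) {m : ℕ} (p : Fin m → V) (e : Sym2 (Fin m)) :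
    ℝ≥0∞ :=
  ⨅ (i : Fin m) (j : Fin m) (_ : e = s(i, j)), c (p i) (p j)

/-- The lower-level value of an upper-level solution `E` (a spanning tree of the cluster
graph): the minimum over node selections `p i ∈ Vc i` of the total cost of the edges of `E`
(the lower-level problem is solved optimally). -/
def treeValue {V : Type*} (c : V → V → ℝ≥0∞) {m : ℕ} (Vc : Fin m → Finset V)
    (E : Finset (Sym2 (Fin m))) : ℝ≥0∞ :=
  ⨅ (p : Fin m → V) (_ : ∀ i, p i ∈ Vc i), ∑ e ∈ E, eCost c p e

/-- Optimal upper-level solutions: spanning trees of the cluster graph whose lower-level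
value is globally minimal. -/
def OptTree {V : Type*} (c : V → V → ℝ≥0∞) {m : ℕ} (Vc : Fin m → Finset V)
    (E : Finset (Sym2 (Fin m))) : Prop :=
  IsSpanningTree m E ∧ ∀ E', IsSpanningTree m E' → treeValue c Vc E ≤ treeValue c Vc E'
abbrev VS (m : ℕ) := Fin m × Fin m

def VcGS (m : ℕ) : Fin m → Finset (VS m) := fun i => Finset.univ.filter (fun p => p.1 = i)

def ecGS (m : ℕ) (a b : Fin m) : ℝ≥0∞ :=
  if a.val = 0 ∧ b.val = 0 then 1
  else if a.val ≠ 0 ∧ b.val ≠ 0 then 2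
  else if a.val ≠ 0 ∧ b.val = 0 then ((m ^ 2 : ℕ) : ℝ≥0∞) ^ 2
  else ((m ^ 2 : ℕ) : ℝ≥0∞)

def cGS (m : ℕ) (p q : VS m) : ℝ≥0∞ :=
  if p.1.val = 0 ∧ q.1.val ≠ 0 then ecGS m q.2 p.2
  else if q.1.val = 0 ∧ p.1.val ≠ 0 then ecGS m p.2 q.2
  else ⊤
/-- The spanning trees of the cluster graph of `G_S` whose lower-level value is finite. -/
noncomputable def finiteTreesGS (m : ℕ) : Finset (Finset (Sym2 (Fin m))) :=
  Finset.univ.filter (fun E => IsSpanningTree m E ∧ treeValue (cGS m) (VcGS m) E ≠ ⊤)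

/-- The uniform distribution over the spanning trees of the cluster graph of `G_S` having
cost less than `∞` (the initial distribution of the tree-based (1+1) EA). -/
noncomputable def unifTreesGS (m : ℕ) : Finset (Sym2 (Fin m)) → ℝ≥0∞ :=
  fun E => if E ∈ finiteTreesGS m then ((finiteTreesGS m).card : ℝ≥0∞)⁻¹ else 0

/-- The star on the cluster graph of `G_S` centred at the central cluster `c0`. -/
def starGS (m : ℕ) (c0 : Fin m) : Finset (Sym2 (Fin m)) :=
  Finset.univ.filter (fun e : Sym2 (Fin m) => ¬ e.IsDiag ∧ c0 ∈ e)



/-! The only finite-cost connections of `G_S` run between the central cluster and a peripheral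
one, so every spanning tree of finite value lies inside the star at the central cluster; having
the same number `m - 1` of edges, it is that star. Hence the initial distribution, uniform over
the finite-value trees, is the point mass at the optimum, and the optimization time is `0`. -/

section OptimizationTime

variable {State : Type*} {μ0 : State → ℝ≥0∞} {K : State → State → ℝ≥0∞} {Opt : State → Prop}

theorem survival_eq_zero_of_initial_opt (h : ∀ x, μ0 x ≠ 0 → Opt x) (t : ℕ) :
    survival μ0 K Opt t = 0 := by
  refine ENNReal.tsum_eq_zero.2 fun x => ?_
  split_ifs with hx
  · have hμ : μ0 (x 0) = 0 := by_contra fun h0 => hx 0 (h _ h0)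
    rw [trajProb, hμ, zero_mul]
  · rfl

theorem expectedOptTime_eq_zero_of_initial_opt (h : ∀ x, μ0 x ≠ 0 → Opt x) :
    expectedOptTime μ0 K Opt = 0 :=
  ENNReal.tsum_eq_zero.2 (survival_eq_zero_of_initial_opt h)

end OptimizationTime

section ClusterTrees

variable {m : ℕ}

theorem edgeSet_fromEdgeSet_of_not_isDiag {E : Finset (Sym2 (Fin m))}
    (hE : ∀ e ∈ E, ¬ e.IsDiag) :
    (SimpleGraph.fromEdgeSet (E : Set (Sym2 (Fin m)))).edgeSet = E := by
  rw [SimpleGraph.edgeSet_fromEdgeSet, sdiff_eq_left, Set.disjoint_left]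
  exact hE

theorem isSpanningTree_iff {E : Finset (Sym2 (Fin m))} (hE : ∀ e ∈ E, ¬ e.IsDiag) :
    IsSpanningTree m E ↔
      (SimpleGraph.fromEdgeSet (E : Set (Sym2 (Fin m)))).Connected ∧ E.card + 1 = m := by
  rw [IsSpanningTree, SimpleGraph.isTree_iff_connected_and_card,
    edgeSet_fromEdgeSet_of_not_isDiag hE, Nat.card_coe_set_eq, Set.ncard_coe_finset,
    Nat.card_fin]
  exact and_iff_right hE

theorem IsSpanningTree.card_add_one {E : Finset (Sym2 (Fin m))} (h : IsSpanningTree m E) :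
    E.card + 1 = m :=
  ((isSpanningTree_iff h.1).1 h).2

theorem IsSpanningTree.eq_of_subset {E E' : Finset (Sym2 (Fin m))} (h : IsSpanningTree m E)
    (h' : IsSpanningTree m E') (hsub : E ⊆ E') : E = E' :=
  Finset.eq_of_subset_of_card_le hsub (by have := h.card_add_one; have := h'.card_add_one; omega)

theorem mem_starGS {c0 : Fin m} {e : Sym2 (Fin m)} : e ∈ starGS m c0 ↔ ¬ e.IsDiag ∧ c0 ∈ e := by
  simp [starGS]

theorem starGS_eq_image (c0 : Fin m) :
    starGS m c0 = (Finset.univ.erase c0).image (fun j => s(c0, j)) := by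
  ext e
  induction e using Sym2.inductionOn with
  | hf a b =>
    simp only [mem_starGS, Sym2.mk_isDiag_iff, Sym2.mem_iff, Finset.mem_image, Finset.mem_univ,
      Finset.mem_erase, and_true, Sym2.eq_iff]
    constructor
    · rintro ⟨hab, rfl | rfl⟩
      · exact ⟨b, Ne.symm hab, Or.inl ⟨rfl, rfl⟩⟩
      · exact ⟨a, hab, Or.inr ⟨rfl, rfl⟩⟩
    · rintro ⟨j, hj, ⟨rfl, rfl⟩ | ⟨rfl, rfl⟩⟩
      · exact ⟨Ne.symm hj, Or.inl rfl⟩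
      · exact ⟨hj, Or.inr rfl⟩

theorem card_starGS (c0 : Fin m) : (starGS m c0).card + 1 = m := by
  rw [starGS_eq_image, Finset.card_image_of_injective _ fun _ _ => Sym2.congr_right.mp,
    Finset.card_erase_of_mem (Finset.mem_univ _), Finset.card_univ, Fintype.card_fin]
  have := c0.pos
  omega

theorem isSpanningTree_starGS (c0 : Fin m) : IsSpanningTree m (starGS m c0) := by
  have hdiag : ∀ e ∈ starGS m c0, ¬ e.IsDiag := fun e he => (mem_starGS.1 he).1
  refine (isSpanningTree_iff hdiag).2 ⟨?_, card_starGS c0⟩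
  refine (SimpleGraph.connected_iff_exists_forall_reachable _).2 ⟨c0, fun j => ?_⟩
  rcases eq_or_ne c0 j with rfl | hj
  · rfl
  · refine SimpleGraph.Adj.reachable ((SimpleGraph.fromEdgeSet_adj _).2 ⟨?_, hj⟩)
    rw [Finset.mem_coe, starGS_eq_image]
    exact Finset.mem_image_of_mem _ (Finset.mem_erase.2 ⟨hj.symm, Finset.mem_univ _⟩)

end ClusterTrees

section TreeValue

variable {V : Type*} {c : V → V → ℝ≥0∞} {m : ℕ} {Vc : Fin m → Finset V}

theorem eCost_le (p : Fin m → V) (i j : Fin m) : eCost c p s(i, j) ≤ c (p i) (p j) :=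
  iInf_le_of_le i (iInf_le_of_le j (iInf_le _ rfl))

theorem exists_of_eCost_ne_top {p : Fin m → V} {e : Sym2 (Fin m)} (h : eCost c p e ≠ ⊤) :
    ∃ i j, e = s(i, j) ∧ c (p i) (p j) ≠ ⊤ := by
  simpa only [eCost, ne_eq, iInf_eq_top, not_forall, exists_prop] using h

theorem treeValue_le_sum {p : Fin m → V} (hp : ∀ i, p i ∈ Vc i) (E : Finset (Sym2 (Fin m))) :
    treeValue c Vc E ≤ ∑ e ∈ E, eCost c p e :=
  iInf₂_le p hp

theorem exists_of_treeValue_ne_top {E : Finset (Sym2 (Fin m))} (h : treeValue c Vc E ≠ ⊤) :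
    ∃ p : Fin m → V, (∀ i, p i ∈ Vc i) ∧ ∀ e ∈ E, eCost c p e ≠ ⊤ := by
  simp only [treeValue, ne_eq, iInf_eq_top, not_forall, exists_prop] at h
  obtain ⟨p, hp, hsum⟩ := h
  exact ⟨p, hp, fun e he htop => hsum (ENNReal.sum_eq_top.2 ⟨e, he, htop⟩)⟩

theorem optTree_of_unique_finite {E : Finset (Sym2 (Fin m))} (hE : IsSpanningTree m E)
    (huniq : ∀ E', IsSpanningTree m E' → treeValue c Vc E' ≠ ⊤ → E' = E) : OptTree c Vc E := by
  refine ⟨hE, fun E' hE' => ?_⟩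
  by_cases hfin : treeValue c Vc E' = ⊤
  · exact hfin ▸ le_top
  · rw [huniq E' hE' hfin]

end TreeValue

section InstanceGS

variable {m : ℕ} {c0 : Fin m}

theorem ecGS_ne_top (a b : Fin m) : ecGS m a b ≠ ⊤ := by
  unfold ecGS
  split_ifs <;> simp

theorem cGS_ne_top_iff {p q : VS m} :
    cGS m p q ≠ ⊤ ↔ (p.1.val = 0 ∧ q.1.val ≠ 0) ∨ (q.1.val = 0 ∧ p.1.val ≠ 0) := by
  unfold cGS
  split_ifs <;> simp_all [ecGS_ne_top]

theorem subset_starGS_of_treeValue_ne_top (hc0 : c0.val = 0) {E : Finset (Sym2 (Fin m))}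
    (h : treeValue (cGS m) (VcGS m) E ≠ ⊤) : E ⊆ starGS m c0 := by
  obtain ⟨p, hp, hfin⟩ := exists_of_treeValue_ne_top h
  have hfst : ∀ i, (p i).1 = i := fun i => (Finset.mem_filter.1 (hp i)).2
  intro e he
  obtain ⟨i, j, rfl, hij⟩ := exists_of_eCost_ne_top (hfin e he)
  rw [cGS_ne_top_iff, hfst, hfst] at hij
  have hcentral : ∀ k : Fin m, k.val = 0 → k = c0 := fun k hk => Fin.ext (hk.trans hc0.symm)
  simp only [mem_starGS, Sym2.mk_isDiag_iff, Sym2.mem_iff]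
  rcases hij with ⟨hi, hj⟩ | ⟨hj, hi⟩
  · exact ⟨fun hij => hj (hij ▸ hi), Or.inl (hcentral i hi).symm⟩
  · exact ⟨fun hij => hi (hij ▸ hj), Or.inr (hcentral j hj).symm⟩

theorem treeValue_starGS_ne_top (hc0 : c0.val = 0) :
    treeValue (cGS m) (VcGS m) (starGS m c0) ≠ ⊤ := by
  -- every star edge joins the central cluster to a peripheral one, so any selection will do
  have hp : ∀ i, (i, i) ∈ VcGS m i := fun i => by simp [VcGS]
  refine ne_top_of_le_ne_top ?_ (treeValue_le_sum hp _)
  refine ENNReal.sum_ne_top.2 fun e he => ?_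
  rw [starGS_eq_image, Finset.mem_image] at he
  obtain ⟨j, hj, rfl⟩ := he
  have hj0 : j.val ≠ 0 := fun h => (Finset.mem_erase.1 hj).1 (Fin.ext (h.trans hc0.symm))
  exact ne_top_of_le_ne_top (cGS_ne_top_iff.2 (Or.inl ⟨hc0, hj0⟩)) (eCost_le _ c0 j)

end InstanceGS

theorem treeEA_GS_constant_general (m : ℕ) (c0 : Fin m) (hc0 : c0.val = 0) :
    (IsSpanningTree m (starGS m c0) ∧ treeValue (cGS m) (VcGS m) (starGS m c0) ≠ ⊤) ∧
    (∀ E : Finset (Sym2 (Fin m)),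
        IsSpanningTree m E → treeValue (cGS m) (VcGS m) E ≠ ⊤ → E = starGS m c0) ∧
    OptTree (cGS m) (VcGS m) (starGS m c0) ∧
    expectedOptTime (unifTreesGS m)
        (eaKernel (treeMut m) (treeValue (cGS m) (VcGS m)))
        (OptTree (cGS m) (VcGS m)) ≤ 1 := by
  have hstar := isSpanningTree_starGS c0
  have huniq : ∀ E : Finset (Sym2 (Fin m)),
      IsSpanningTree m E → treeValue (cGS m) (VcGS m) E ≠ ⊤ → E = starGS m c0 :=
    fun E hE hfin => hE.eq_of_subset hstar (subset_starGS_of_treeValue_ne_top hc0 hfin)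
  have hopt := optTree_of_unique_finite hstar huniq
  have hinit : ∀ E, unifTreesGS m E ≠ 0 → OptTree (cGS m) (VcGS m) E := fun E hE => by
    have hmem : E ∈ finiteTreesGS m := by_contra fun h => hE (if_neg h)
    obtain ⟨hE, hfin⟩ := (Finset.mem_filter.1 hmem).2
    exact huniq E hE hfin ▸ hopt
  refine ⟨⟨hstar, treeValue_starGS_ne_top hc0⟩, huniq, hopt, ?_⟩
  rw [expectedOptTime_eq_zero_of_initial_opt hinit]
  exact zero_le_one

/-- The tree-based (1+1) EA solves the instance `G_S` in expected constant
time: the subgraph of finite-cost connections between clusters of `G_S` is a star centred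
at the central cluster, so the cluster graph admits exactly one spanning tree of finite
cost (namely this star), this star is an optimal upper-level solution, and the expected
optimization time is (at most) constant. -/
theorem treeEA_GS_constant (m : ℕ) (hm : 2 ≤ m) (c0 : Fin m) (hc0 : c0.val = 0) :
    (IsSpanningTree m (starGS m c0) ∧ treeValue (cGS m) (VcGS m) (starGS m c0) ≠ ⊤) ∧
    (∀ E : Finset (Sym2 (Fin m)),
        IsSpanningTree m E → treeValue (cGS m) (VcGS m) E ≠ ⊤ → E = starGS m c0) ∧
    OptTree (cGS m) (VcGS m) (starGS m c0) ∧
    expectedOptTime (unifTreesGS m)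
        (eaKernel (treeMut m) (treeValue (cGS m) (VcGS m)))
        (OptTree (cGS m) (VcGS m)) ≤ 1 :=
  treeEA_GS_constant_general m c0 hc0
end
end

section
/- The cluster-based (1+1) EA solves the instance G_G in expected time O(m): from any non-optimal node selection, the probability that a single mutation step produces the optimal selection is at least 1/(2m), namely the probability that cluster V_1 is chosen for mutation (probability 1/m) and that the correct one of its two nodes is selected (probability 1/2), so the expected waiting time for this event is O(m). -/
open scoped ENNReal BigOperators Classical

noncomputable section

/-- The node set of the instance `G_G`: cluster `0` (i.e. `V₁`) contains the two nodes
`v₁₁ = Sum.inl 0` and `v₁₂ = Sum.inr ()`, and each cluster `i ≥ 1` (i.e. `V_{i+1}`)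
contains the single node `v_{(i+1)1} = Sum.inl i`. -/
abbrev VG (m : ℕ) := Fin m ⊕ Unit

/-- The clusters of `G_G`. -/
def VcGG (m : ℕ) : Fin m → Finset (VG m) :=
  fun i => if i.val = 0 then {Sum.inl i, Sum.inr ()} else {Sum.inl i}

/-- Auxiliary (one-directional) cost table for `G_G`. -/
def fGG (m : ℕ) : VG m → VG m → ℝ≥0∞
  | Sum.inl a, Sum.inl b =>
      if a.val = 0 ∧ 2 ≤ b.val then 1
      else if a.val = 1 ∧ 2 ≤ b.val then 1 + ((2 * m : ℕ) : ℝ≥0∞)⁻¹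
      else ⊤
  | Sum.inr _, Sum.inl b => if b.val = 1 then (2 : ℝ≥0∞)⁻¹ else ⊤
  | _, _ => ⊤

/-- The edge costs of the instance `G_G`: `c(v₁₁, v_{i1}) = 1` and
`c(v₂₁, v_{i1}) = 1 + 1/(2m)` for every `3 ≤ i ≤ m`, `c(v₁₂, v₂₁) = 1/2`, and all other
edges have cost `∞`. -/
def cGG (m : ℕ) (p q : VG m) : ℝ≥0∞ := fGG m p q ⊓ fGG m q p
/-- Valid node selections of `G_G` (one node per cluster). -/
def ValidGG (m : ℕ) (x : Fin m → VG m) : Prop := ∀ i, x i ∈ VcGG m i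

/-- Optimal node selections of `G_G`: valid selections minimising the cost of a minimum
spanning tree on the induced subgraph (restricted to finite-cost edges). -/
def OptGG (m : ℕ) (x : Fin m → VG m) : Prop :=
  ValidGG m x ∧ ∀ y, ValidGG m y → mstCost (cGG m) x ≤ mstCost (cGG m) y

/-!
From a valid non-optimal selection the EA reaches an optimum in one step with probability at
least `1/(2m)`: a valid selection of `G_G` is determined by its node in `V₁`, so there are only
two of them, and if one is not optimal the other one is. It is produced by mutating `V₁` alone
(probability `1/m`, the other singleton clusters keeping their node) and drawing the other node
of `V₁` (probability `1/2`), and it is accepted since its cost is minimal. Hence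
`P(T > t) ≤ (1 - 1/(2m))^t`, and summing the geometric series gives `E[T] ≤ 2m`.
-/

section MarkovChain

variable {State : Type*}

theorem tsum_eaKernel_eq_one {mutate : State → State → ℝ≥0∞} (cost : State → ℝ≥0∞) {x : State}
    (hmutate : ∑' y, mutate x y = 1) : ∑' y, eaKernel mutate cost x y = 1 := by
  unfold eaKernel
  rw [ENNReal.tsum_add, tsum_ite_eq x, ← ENNReal.tsum_add, ← hmutate]
  exact tsum_congr fun y => by by_cases h : cost y ≤ cost x <;> simp [h]

theorem mutate_le_eaKernel (mutate : State → State → ℝ≥0∞) {cost : State → ℝ≥0∞} {x y : State}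
    (hcost : cost y ≤ cost x) : mutate x y ≤ eaKernel mutate cost x y := by
  rw [eaKernel, if_pos hcost]
  exact le_self_add

theorem tsum_ite_le_tsum_ite_eaKernel (mutate : State → State → ℝ≥0∞) {cost : State → ℝ≥0∞}
    {x : State} {P : State → Prop} (hcost : ∀ y, P y → cost y ≤ cost x) :
    (∑' y, if P y then mutate x y else 0) ≤ ∑' y, if P y then eaKernel mutate cost x y else 0 :=
  ENNReal.tsum_le_tsum fun y => by
    split_ifs with hy
    exacts [mutate_le_eaKernel mutate (hcost y hy), le_rfl]

theorem eq_or_mutate_ne_zero_of_eaKernel_ne_zero {mutate : State → State → ℝ≥0∞}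
    {cost : State → ℝ≥0∞} {x y : State} (h : eaKernel mutate cost x y ≠ 0) :
    y = x ∨ mutate x y ≠ 0 := by
  by_contra! hne
  apply h
  simp [eaKernel, hne.1, hne.2]

theorem trajProb_snoc (μ0 : State → ℝ≥0∞) (K : State → State → ℝ≥0∞) {t : ℕ}
    (x : Fin (t + 1) → State) (y : State) :
    trajProb μ0 K (Fin.snoc x y : Fin (t + 2) → State) =
      trajProb μ0 K x * K (x (Fin.last t)) y := by
  simp only [trajProb, Fin.prod_univ_castSucc, Fin.snoc_castSucc, Fin.succ_castSucc,
    Fin.succ_last, Fin.snoc_last, mul_assoc]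
  rw [show (0 : Fin (t + 2)) = Fin.castSucc 0 from rfl, Fin.snoc_castSucc]

theorem forall_of_trajProb_ne_zero {μ0 : State → ℝ≥0∞} {K : State → State → ℝ≥0∞}
    {Valid : State → Prop} (hsupp : ∀ x, μ0 x ≠ 0 → Valid x)
    (hclosed : ∀ x y, Valid x → K x y ≠ 0 → Valid y)
    {t : ℕ} {x : Fin (t + 1) → State} (hx : trajProb μ0 K x ≠ 0) (i : Fin (t + 1)) :
    Valid (x i) := by
  obtain ⟨h0, hsteps⟩ := mul_ne_zero_iff.mp hx
  induction i using Fin.induction with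
  | zero => exact hsupp _ h0
  | succ i ih => exact hclosed _ _ ih (Finset.prod_ne_zero_iff.mp hsteps i (Finset.mem_univ i))

theorem survival_zero_le_one (μ0 : State → ℝ≥0∞) (K : State → State → ℝ≥0∞)
    (Opt : State → Prop) (hμ0 : ∑' x, μ0 x = 1) : survival μ0 K Opt 0 ≤ 1 := by
  rw [survival, ← hμ0, ← (Equiv.funUnique (Fin 1) State).symm.tsum_eq]
  refine ENNReal.tsum_le_tsum fun s => ?_
  split_ifs <;> simp [trajProb, Equiv.funUnique]

variable {μ0 : State → ℝ≥0∞} {K : State → State → ℝ≥0∞} {Opt Valid : State → Prop}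

theorem survival_succ_le_mul (q : ℝ≥0∞) (hsupp : ∀ x, μ0 x ≠ 0 → Valid x)
    (hclosed : ∀ x y, Valid x → K x y ≠ 0 → Valid y)
    (hq : ∀ x, Valid x → ¬ Opt x → (∑' y, if ¬ Opt y then K x y else 0) ≤ q) (t : ℕ) :
    survival μ0 K Opt (t + 1) ≤ q * survival μ0 K Opt t := by
  have hsplit : survival μ0 K Opt (t + 1) = ∑' (x : Fin (t + 1) → State) (y : State),
      if (∀ i, ¬ Opt (x i)) ∧ ¬ Opt y then trajProb μ0 K x * K (x (Fin.last t)) y else 0 := by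
    rw [survival, ← (Fin.snocEquiv fun _ => State).tsum_eq, ENNReal.tsum_prod',
      ENNReal.tsum_comm]
    refine tsum_congr fun x => tsum_congr fun y => ?_
    rw [show (Fin.snocEquiv fun _ => State) (y, x) = Fin.snoc x y from rfl, trajProb_snoc]
    simp only [Fin.forall_fin_succ', Fin.snoc_castSucc, Fin.snoc_last]
  have hstep : ∀ x : Fin (t + 1) → State,
      (∑' y, if (∀ i, ¬ Opt (x i)) ∧ ¬ Opt y then trajProb μ0 K x * K (x (Fin.last t)) y else 0)
        ≤ q * if ∀ i, ¬ Opt (x i) then trajProb μ0 K x else 0 := by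
    intro x
    by_cases hnone : ∀ i, ¬ Opt (x i)
    · by_cases hx : trajProb μ0 K x = 0
      · simp [hx]
      have hlast := forall_of_trajProb_ne_zero hsupp hclosed hx (Fin.last t)
      calc (∑' y, if (∀ i, ¬ Opt (x i)) ∧ ¬ Opt y
              then trajProb μ0 K x * K (x (Fin.last t)) y else 0)
          = trajProb μ0 K x * ∑' y, if ¬ Opt y then K (x (Fin.last t)) y else 0 := by
            rw [← ENNReal.tsum_mul_left]
            exact tsum_congr fun y => by split_ifs <;> simp_all
        _ ≤ trajProb μ0 K x * q := mul_le_mul_right (hq _ hlast (hnone _)) _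
        _ = q * if ∀ i, ¬ Opt (x i) then trajProb μ0 K x else 0 := by rw [if_pos hnone, mul_comm]
    · simp [hnone]
  rw [hsplit, survival, ← ENNReal.tsum_mul_left]
  exact ENNReal.tsum_le_tsum hstep

theorem survival_le_pow (q : ℝ≥0∞) (hμ0 : ∑' x, μ0 x = 1) (hsupp : ∀ x, μ0 x ≠ 0 → Valid x)
    (hclosed : ∀ x y, Valid x → K x y ≠ 0 → Valid y)
    (hq : ∀ x, Valid x → ¬ Opt x → (∑' y, if ¬ Opt y then K x y else 0) ≤ q) (t : ℕ) :
    survival μ0 K Opt t ≤ q ^ t := by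
  induction t with
  | zero => simpa using survival_zero_le_one μ0 K Opt hμ0
  | succ t ih =>
    calc survival μ0 K Opt (t + 1) ≤ q * survival μ0 K Opt t :=
          survival_succ_le_mul q hsupp hclosed hq t
      _ ≤ q * q ^ t := mul_le_mul_right ih q
      _ = q ^ (t + 1) := (pow_succ' q t).symm

theorem tsum_ite_not_le_one_sub {p : ℝ≥0∞} {x : State} (hK : ∑' y, K x y = 1)
    (hp : p ≤ ∑' y, if Opt y then K x y else 0) :
    (∑' y, if ¬ Opt y then K x y else 0) ≤ 1 - p := by
  refine ENNReal.le_sub_of_add_le_left (ne_top_of_le_ne_top ENNReal.one_ne_top ?_) ?_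
  · exact hp.trans (hK ▸ ENNReal.tsum_le_tsum fun y => by split_ifs <;> simp)
  · calc p + ∑' y, (if ¬ Opt y then K x y else 0)
        ≤ (∑' y, if Opt y then K x y else 0) + ∑' y, if ¬ Opt y then K x y else 0 := by gcongr
      _ = 1 := by
        rw [← ENNReal.tsum_add, ← hK]
        exact tsum_congr fun y => by by_cases h : Opt y <;> simp [h]

theorem expectedOptTime_le_inv {p : ℝ≥0∞} (hp1 : p ≤ 1) (hμ0 : ∑' x, μ0 x = 1)
    (hsupp : ∀ x, μ0 x ≠ 0 → Valid x) (hK : ∀ x, Valid x → ∑' y, K x y = 1)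
    (hclosed : ∀ x y, Valid x → K x y ≠ 0 → Valid y)
    (hp : ∀ x, Valid x → ¬ Opt x → p ≤ ∑' y, if Opt y then K x y else 0) :
    expectedOptTime μ0 K Opt ≤ p⁻¹ :=
  calc expectedOptTime μ0 K Opt ≤ ∑' t : ℕ, (1 - p) ^ t :=
        ENNReal.tsum_le_tsum <| survival_le_pow _ hμ0 hsupp hclosed
          fun x hx hnx => tsum_ite_not_le_one_sub (hK x hx) (hp x hx hnx)
    _ = p⁻¹ := by rw [ENNReal.tsum_geometric, ENNReal.sub_sub_cancel ENNReal.one_ne_top hp1]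

end MarkovChain

section ClusterMutation

variable {m : ℕ} {V : Type*} [DecidableEq V] {Vc : Fin m → Finset V}

theorem inv_natCast_le_one_of_fin (i : Fin m) : (m : ℝ≥0∞)⁻¹ ≤ 1 :=
  ENNReal.inv_le_one.mpr (Nat.one_le_cast.mpr (Fin.pos i))

theorem tsum_clusterMut_eq_one [Fintype V] (hVc : ∀ i, (Vc i).Nonempty) (x : Fin m → V) :
    ∑' y, clusterMut m Vc x y = 1 := by
  rw [tsum_fintype]
  unfold clusterMut
  rw [← Fintype.prod_sum fun i v => (if v ∈ Vc i then (m : ℝ≥0∞)⁻¹ * ((Vc i).card : ℝ≥0∞)⁻¹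
    else 0) + if v = x i then 1 - (m : ℝ≥0∞)⁻¹ else 0]
  refine Finset.prod_eq_one fun i _ => ?_
  have hcard : ((Vc i).card : ℝ≥0∞) ≠ 0 := by simpa using (hVc i).card_pos.ne'
  rw [Finset.sum_add_distrib, Finset.sum_ite_mem, Finset.univ_inter, Finset.sum_const,
    nsmul_eq_mul, mul_left_comm, ENNReal.mul_inv_cancel hcard (ENNReal.natCast_ne_top _),
    mul_one, Finset.sum_ite_eq' Finset.univ (x i), if_pos (Finset.mem_univ _)]
  exact add_tsub_cancel_of_le (inv_natCast_le_one_of_fin i)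

theorem mem_or_eq_of_clusterMut_ne_zero {x y : Fin m → V} (h : clusterMut m Vc x y ≠ 0)
    (i : Fin m) : y i ∈ Vc i ∨ y i = x i := by
  by_contra! hi
  exact h (Finset.prod_eq_zero (Finset.mem_univ i) (by simp [hi.1, hi.2]))

/-- Each singleton cluster that keeps its node contributes the factor `1/m + (1 - 1/m) = 1`. -/
theorem clusterMut_update {x : Fin m → V} (hx : ∀ i, x i ∈ Vc i) {i₀ : Fin m}
    (hsingle : ∀ i ≠ i₀, (Vc i).card = 1) {v : V} (hv : v ∈ Vc i₀) (hne : v ≠ x i₀) :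
    clusterMut m Vc x (Function.update x i₀ v) = (m : ℝ≥0∞)⁻¹ * ((Vc i₀).card : ℝ≥0∞)⁻¹ := by
  rw [clusterMut, Finset.prod_eq_single i₀]
  · simp [hv, hne]
  · intro i _ hi
    rw [Function.update_of_ne hi, if_pos (hx i), if_pos rfl, hsingle i hi, Nat.cast_one, inv_one,
      mul_one]
    exact add_tsub_cancel_of_le (inv_natCast_le_one_of_fin i)
  · exact fun h => absurd (Finset.mem_univ i₀) h

end ClusterMutation

section InstanceGG

variable {m : ℕ}

theorem mem_VcGG {i : Fin m} {v : VG m} :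
    v ∈ VcGG m i ↔ v = Sum.inl i ∨ (i.val = 0 ∧ v = Sum.inr ()) := by
  unfold VcGG
  split_ifs with h <;> simp [h]

theorem VcGG_nonempty (i : Fin m) : (VcGG m i).Nonempty :=
  ⟨Sum.inl i, mem_VcGG.mpr (Or.inl rfl)⟩

theorem card_VcGG_of_val_eq_zero {i : Fin m} (h : i.val = 0) : (VcGG m i).card = 2 := by
  rw [VcGG, if_pos h]
  exact Finset.card_pair Sum.inl_ne_inr

theorem card_VcGG_of_val_ne_zero {i : Fin m} (h : i.val ≠ 0) : (VcGG m i).card = 1 := by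
  rw [VcGG, if_neg h]
  exact Finset.card_singleton _

theorem ValidGG.eq_of_apply_zero_eq [NeZero m] {x y : Fin m → VG m} (hx : ValidGG m x)
    (hy : ValidGG m y) (h0 : x 0 = y 0) : x = y := by
  funext i
  by_cases hi : i = 0
  · rw [hi, h0]
  · have hval : i.val ≠ 0 := Fin.val_ne_zero_iff.mpr hi
    have hxi := mem_VcGG.mp (hx i)
    have hyi := mem_VcGG.mp (hy i)
    simp only [hval, false_and, or_false] at hxi hyi
    rw [hxi, hyi]

theorem ValidGG.eq_or_eq [NeZero m] {x y z : Fin m → VG m} (hx : ValidGG m x) (hy : ValidGG m y)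
    (hz : ValidGG m z) (hxy : x ≠ y) : z = x ∨ z = y := by
  have hx0 := mem_VcGG.mp (hx 0)
  have hy0 := mem_VcGG.mp (hy 0)
  have hz0 := mem_VcGG.mp (hz 0)
  have hxy0 : x 0 ≠ y 0 := fun h => hxy (hx.eq_of_apply_zero_eq hy h)
  simp only [Fin.val_zero, true_and] at hx0 hy0 hz0
  by_cases hzx : z 0 = x 0
  · exact Or.inl (hz.eq_of_apply_zero_eq hx hzx)
  · refine Or.inr (hz.eq_of_apply_zero_eq hy ?_)
    rcases hx0 with h | h <;> rcases hy0 with h' | h' <;> rcases hz0 with h'' | h'' <;>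
      simp_all

theorem optGG_of_not_optGG [NeZero m] {x y : Fin m → VG m} (hx : ValidGG m x)
    (hnx : ¬ OptGG m x) (hy : ValidGG m y) (hxy : x ≠ y) : OptGG m y := by
  have hlt : mstCost (cGG m) y < mstCost (cGG m) x := by
    by_contra! hle
    refine hnx ⟨hx, fun z hz => ?_⟩
    rcases hx.eq_or_eq hy hz hxy with rfl | rfl
    exacts [le_rfl, hle]
  refine ⟨hy, fun z hz => ?_⟩
  rcases hx.eq_or_eq hy hz hxy with rfl | rfl
  exacts [hlt.le, le_rfl]

/-- It suffices to mutate `V₁` alone, to its other node. -/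
theorem inv_two_mul_le_tsum_clusterMut_optGG [NeZero m] {x : Fin m → VG m} (hx : ValidGG m x)
    (hnx : ¬ OptGG m x) :
    ((2 * m : ℕ) : ℝ≥0∞)⁻¹ ≤ ∑' y, if OptGG m y then clusterMut m (VcGG m) x y else 0 := by
  have hcard0 : (VcGG m 0).card = 2 := card_VcGG_of_val_eq_zero (Fin.val_zero m)
  obtain ⟨v, hv, hne⟩ := Finset.exists_mem_ne (hcard0 ▸ one_lt_two) (x 0)
  set y := Function.update x 0 v with hydef
  have hy : ValidGG m y := fun i => by
    rcases eq_or_ne i 0 with rfl | hi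
    · rwa [hydef, Function.update_self]
    · rw [hydef, Function.update_of_ne hi]; exact hx i
  have hxy : x ≠ y := fun h => hne (by rw [h, hydef, Function.update_self])
  have hmut : clusterMut m (VcGG m) x y = ((2 * m : ℕ) : ℝ≥0∞)⁻¹ := by
    rw [clusterMut_update hx (fun i hi => card_VcGG_of_val_ne_zero (Fin.val_ne_zero_iff.mpr hi))
      hv hne, hcard0, Nat.cast_mul, ENNReal.mul_inv (by simp) (by simp), mul_comm]
  calc ((2 * m : ℕ) : ℝ≥0∞)⁻¹ = if OptGG m y then clusterMut m (VcGG m) x y else 0 := by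
        rw [if_pos (optGG_of_not_optGG hx hnx hy hxy), hmut]
    _ ≤ _ := ENNReal.le_tsum y

theorem ValidGG.of_eaKernel_ne_zero {x y : Fin m → VG m} (hx : ValidGG m x)
    (h : eaKernel (clusterMut m (VcGG m)) (mstCost (cGG m)) x y ≠ 0) : ValidGG m y := by
  rcases eq_or_mutate_ne_zero_of_eaKernel_ne_zero h with rfl | hmut
  · exact hx
  · intro i
    rcases mem_or_eq_of_clusterMut_ne_zero hmut i with hi | hi
    exacts [hi, hi ▸ hx i]

end InstanceGG

/-- The cluster-based (1+1) EA solves the instance `G_G` in expected time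
`O(m)`: from any node selection, the probability that a single mutation step produces an
optimal node selection is at least `1/(2m)` — namely the probability that cluster `V₁` is
chosen for mutation (probability `1/m`) and that the correct one of its two nodes is
selected (probability `1/2`) — so for any initial distribution over node selections the
expected optimization time is at most `2m = O(m)`. -/
theorem clusterEA_GG_upper_bound (m : ℕ) (hm : 2 ≤ m)
    (μ0 : (Fin m → VG m) → ℝ≥0∞)
    (hμ0 : ∑' x, μ0 x = 1)
    (hsupp : ∀ x, μ0 x ≠ 0 → ValidGG m x) :
    (∀ x : Fin m → VG m, ValidGG m x → ¬ OptGG m x →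
        ((2 * m : ℕ) : ℝ≥0∞)⁻¹ ≤
          ∑' y : Fin m → VG m, if OptGG m y then clusterMut m (VcGG m) x y else 0) ∧
    expectedOptTime μ0 (eaKernel (clusterMut m (VcGG m)) (mstCost (cGG m))) (OptGG m) ≤
      ((2 * m : ℕ) : ℝ≥0∞) := by
  have : NeZero m := ⟨by omega⟩
  refine ⟨fun x hx hnx => inv_two_mul_le_tsum_clusterMut_optGG hx hnx, ?_⟩
  calc _ ≤ (((2 * m : ℕ) : ℝ≥0∞)⁻¹)⁻¹ :=
        expectedOptTime_le_inv (ENNReal.inv_le_one.mpr (Nat.one_le_cast.mpr (by omega))) hμ0 hsupp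
          (fun x _ => tsum_eaKernel_eq_one _ (tsum_clusterMut_eq_one VcGG_nonempty x))
          (fun _ _ hx => hx.of_eaKernel_ne_zero)
          (fun x hx hnx => (inv_two_mul_le_tsum_clusterMut_optGG hx hnx).trans
            (tsum_ite_le_tsum_ite_eaKernel _ fun _ hy => hy.2 x hx))
    _ = ((2 * m : ℕ) : ℝ≥0∞) := inv_inv _
end
end
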